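/- Under the geodesic polar realization, the first Casimir C₁ = κ₂J₀₁² + J₀₂² + J₀₃² + κ₁J₁₂² + κ₁J₁₃² + κ₁κ₂J₂₃² satisfies C₁ = 2κ₂T at every point of D, and the second Casimir C₂ = κ₂J₀₁J₂₃ − J₀₂J₁₃ + J₀₃J₁₂ vanishes identically on D. -/

import Mathlib

/-!
For `κ = s²` one has `Cκ(x) = cos (s x)` and `s Sκ(x) = sin (s x)`, for `κ = -s²` the same with
`cosh`, `sinh`; either way `Cκ² + κ Sκ² = 1`.
The angle `φ` enters the realization only through a rotation by `φ` of the pairs `(J₀₂, J₀₃)` and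
`(J₁₂, J₁₃)`, which preserves `J₀₂² + J₀₃²`, `J₁₂² + J₁₃²` and `J₀₃ J₁₂ - J₀₂ J₁₃`. At `φ = 0` both
Casimir identities are rational identities in `Cκᵢ, Sκᵢ` that follow from `Cκᵢ² + κᵢ Sκᵢ² = 1`.
-/

namespace Paper
noncomputable section

/-- The κ-dependent cosine Cκ(x) = ∑ (−κ)^l x^{2l}/(2l)!. -/
def Ck (κ x : ℝ) : ℝ := ∑' l : ℕ, (-κ) ^ l * x ^ (2 * l) / (Nat.factorial (2 * l) : ℝ)

/-- The κ-dependent sine Sκ(x) = ∑ (−κ)^l x^{2l+1}/(2l+1)!. -/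
def Sk (κ x : ℝ) : ℝ := ∑' l : ℕ, (-κ) ^ l * x ^ (2 * l + 1) / (Nat.factorial (2 * l + 1) : ℝ)

/-- The κ-dependent tangent Tκ(x) = Sκ(x)/Cκ(x). -/
def Tk (κ x : ℝ) : ℝ := Sk κ x / Ck κ x

/-- Phase space ℝ³ × ℝ³ ≃ ℝ⁶ with canonical coordinates
`(r, θ, φ, p_r, p_θ, p_φ) = (x 0, x 1, x 2, x 3, x 4, x 5)`. -/
abbrev Pt := Fin 6 → ℝ

/-- Partial derivative in the i-th coordinate direction. -/
def pd (f : Pt → ℝ) (i : Fin 6) (x : Pt) : ℝ := fderiv ℝ f x (Pi.single i 1)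

/-- Canonical Poisson bracket {f,g} = ∑_{q} (∂f/∂q ∂g/∂p_q − ∂g/∂q ∂f/∂p_q). -/
def pb (f g : Pt → ℝ) (x : Pt) : ℝ :=
  ∑ i : Fin 3,
    (pd f ⟨i.1, by omega⟩ x * pd g ⟨i.1 + 3, by omega⟩ x
      - pd g ⟨i.1, by omega⟩ x * pd f ⟨i.1 + 3, by omega⟩ x)

/-- Gradient of a function on phase space, as a vector in ℝ⁶. -/
def grad (f : Pt → ℝ) (x : Pt) : Fin 6 → ℝ := fun i => pd f i x

/-- The open domain D where Sκ₁(r), Cκ₁(r), Sκ₂(θ), Cκ₂(θ), cos φ, sin φ are nonzero. -/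
def D (κ₁ κ₂ : ℝ) : Set Pt :=
  {x | Sk κ₁ (x 0) ≠ 0 ∧ Ck κ₁ (x 0) ≠ 0 ∧ Sk κ₂ (x 1) ≠ 0 ∧ Ck κ₂ (x 1) ≠ 0 ∧
       Real.cos (x 2) ≠ 0 ∧ Real.sin (x 2) ≠ 0}

/-- J₀₁ = Cκ₂(θ)p_r − (Sκ₂(θ)/Tκ₁(r))p_θ. -/
def J01 (κ₁ κ₂ : ℝ) (x : Pt) : ℝ :=
  Ck κ₂ (x 1) * x 3 - (Sk κ₂ (x 1) / Tk κ₁ (x 0)) * x 4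

/-- J₀₂. -/
def J02 (κ₁ κ₂ : ℝ) (x : Pt) : ℝ :=
  κ₂ * Sk κ₂ (x 1) * Real.cos (x 2) * x 3
    + (Ck κ₂ (x 1) * Real.cos (x 2) / Tk κ₁ (x 0)) * x 4
    - (Real.sin (x 2) / (Tk κ₁ (x 0) * Sk κ₂ (x 1))) * x 5

/-- J₀₃. -/
def J03 (κ₁ κ₂ : ℝ) (x : Pt) : ℝ :=
  κ₂ * Sk κ₂ (x 1) * Real.sin (x 2) * x 3
    + (Ck κ₂ (x 1) * Real.sin (x 2) / Tk κ₁ (x 0)) * x 4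
    + (Real.cos (x 2) / (Tk κ₁ (x 0) * Sk κ₂ (x 1))) * x 5

/-- J₁₂ = cos φ·p_θ − (sin φ/Tκ₂(θ))p_φ. -/
def J12 (κ₂ : ℝ) (x : Pt) : ℝ :=
  Real.cos (x 2) * x 4 - (Real.sin (x 2) / Tk κ₂ (x 1)) * x 5

/-- J₁₃ = sin φ·p_θ + (cos φ/Tκ₂(θ))p_φ. -/
def J13 (κ₂ : ℝ) (x : Pt) : ℝ :=
  Real.sin (x 2) * x 4 + (Real.cos (x 2) / Tk κ₂ (x 1)) * x 5

/-- J₂₃ = p_φ. -/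
def J23 (x : Pt) : ℝ := x 5

/-- Kinetic energy T. -/
def Tkin (κ₁ κ₂ : ℝ) (x : Pt) : ℝ :=
  (1 / 2) * ((x 3) ^ 2 + (x 4) ^ 2 / (κ₂ * Sk κ₁ (x 0) ^ 2)
    + (x 5) ^ 2 / (κ₂ * Sk κ₁ (x 0) ^ 2 * Sk κ₂ (x 1) ^ 2))

/-- The superintegrable potential U with arbitrary radial function F. -/
def U (κ₁ κ₂ : ℝ) (F : ℝ → ℝ) (β₁ β₂ β₃ : ℝ) (x : Pt) : ℝ :=
  F (x 0) + (1 / Sk κ₁ (x 0) ^ 2) *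
    (β₁ / Ck κ₂ (x 1) ^ 2 + β₂ / (Sk κ₂ (x 1) ^ 2 * Real.cos (x 2) ^ 2)
      + β₃ / (Sk κ₂ (x 1) ^ 2 * Real.sin (x 2) ^ 2))

/-- Integral I₁₂. -/
def I12 (κ₂ β₁ β₂ : ℝ) (x : Pt) : ℝ :=
  (Real.cos (x 2) * x 4 - (Real.sin (x 2) / Tk κ₂ (x 1)) * x 5) ^ 2
    + 2 * β₁ * κ₂ ^ 2 * Tk κ₂ (x 1) ^ 2 * Real.cos (x 2) ^ 2
    + 2 * β₂ * κ₂ / (Tk κ₂ (x 1) ^ 2 * Real.cos (x 2) ^ 2)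

/-- Integral I₁₃. -/
def I13 (κ₂ β₁ β₃ : ℝ) (x : Pt) : ℝ :=
  (Real.sin (x 2) * x 4 + (Real.cos (x 2) / Tk κ₂ (x 1)) * x 5) ^ 2
    + 2 * β₁ * κ₂ ^ 2 * Tk κ₂ (x 1) ^ 2 * Real.sin (x 2) ^ 2
    + 2 * β₃ * κ₂ / (Tk κ₂ (x 1) ^ 2 * Real.sin (x 2) ^ 2)

/-- Integral I₂₃. -/
def I23 (κ₂ β₂ β₃ : ℝ) (x : Pt) : ℝ :=
  (x 5) ^ 2 + 2 * β₂ * κ₂ * Real.tan (x 2) ^ 2 + 2 * β₃ * κ₂ / Real.tan (x 2) ^ 2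

/-- Integral I₁₂₃. -/
def I123 (κ₂ β₁ β₂ β₃ : ℝ) (x : Pt) : ℝ :=
  (x 4) ^ 2 + (x 5) ^ 2 / Sk κ₂ (x 1) ^ 2 + 2 * β₁ * κ₂ / Ck κ₂ (x 1) ^ 2
    + 2 * β₂ * κ₂ / (Sk κ₂ (x 1) ^ 2 * Real.cos (x 2) ^ 2)
    + 2 * β₃ * κ₂ / (Sk κ₂ (x 1) ^ 2 * Real.sin (x 2) ^ 2)

/-- The Smorodinsky–Winternitz Hamiltonian H^SW. -/
def HSW (κ₁ κ₂ β₀ β₁ β₂ β₃ : ℝ) (x : Pt) : ℝ :=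
  Tkin κ₁ κ₂ x + β₀ * Tk κ₁ (x 0) ^ 2 + (1 / Sk κ₁ (x 0) ^ 2) *
    (β₁ / Ck κ₂ (x 1) ^ 2 + β₂ / (Sk κ₂ (x 1) ^ 2 * Real.cos (x 2) ^ 2)
      + β₃ / (Sk κ₂ (x 1) ^ 2 * Real.sin (x 2) ^ 2))

/-- Integral I₀₁ of H^SW. -/
def I01 (κ₁ κ₂ β₀ β₁ : ℝ) (x : Pt) : ℝ :=
  J01 κ₁ κ₂ x ^ 2 + 2 * β₀ * Tk κ₁ (x 0) ^ 2 * Ck κ₂ (x 1) ^ 2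
    + 2 * β₁ / (Tk κ₁ (x 0) ^ 2 * Ck κ₂ (x 1) ^ 2)

/-- Integral I₀₂ of H^SW. -/
def I02 (κ₁ κ₂ β₀ β₂ : ℝ) (x : Pt) : ℝ :=
  J02 κ₁ κ₂ x ^ 2 + 2 * β₀ * κ₂ ^ 2 * Tk κ₁ (x 0) ^ 2 * Sk κ₂ (x 1) ^ 2 * Real.cos (x 2) ^ 2
    + 2 * β₂ * κ₂ / (Tk κ₁ (x 0) ^ 2 * Sk κ₂ (x 1) ^ 2 * Real.cos (x 2) ^ 2)

/-- Integral I₀₃ of H^SW. -/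
def I03 (κ₁ κ₂ β₀ β₃ : ℝ) (x : Pt) : ℝ :=
  J03 κ₁ κ₂ x ^ 2 + 2 * β₀ * κ₂ ^ 2 * Tk κ₁ (x 0) ^ 2 * Sk κ₂ (x 1) ^ 2 * Real.sin (x 2) ^ 2
    + 2 * β₃ * κ₂ / (Tk κ₁ (x 0) ^ 2 * Sk κ₂ (x 1) ^ 2 * Real.sin (x 2) ^ 2)

/-- Generalized Kepler–Coulomb Hamiltonian H^GKC₁ = T + U^GKC₁. -/
def HGKC1 (κ₁ κ₂ k β₂ β₃ : ℝ) (x : Pt) : ℝ :=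
  Tkin κ₁ κ₂ x - k / Tk κ₁ (x 0)
    + (1 / (Sk κ₁ (x 0) ^ 2 * Sk κ₂ (x 1) ^ 2)) *
        (β₂ / Real.cos (x 2) ^ 2 + β₃ / Real.sin (x 2) ^ 2)

/-- Generalized Kepler–Coulomb Hamiltonian H^GKC₂ = T + U^GKC₂. -/
def HGKC2 (κ₁ κ₂ k β₁ β₃ : ℝ) (x : Pt) : ℝ :=
  Tkin κ₁ κ₂ x - k / Tk κ₁ (x 0)
    + (1 / Sk κ₁ (x 0) ^ 2) *
        (β₁ / Ck κ₂ (x 1) ^ 2 + β₃ / (Sk κ₂ (x 1) ^ 2 * Real.sin (x 2) ^ 2))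

/-- Generalized Kepler–Coulomb Hamiltonian H^GKC₃ = T + U^GKC₃. -/
def HGKC3 (κ₁ κ₂ k β₁ β₂ : ℝ) (x : Pt) : ℝ :=
  Tkin κ₁ κ₂ x - k / Tk κ₁ (x 0)
    + (1 / Sk κ₁ (x 0) ^ 2) *
        (β₁ / Ck κ₂ (x 1) ^ 2 + β₂ / (Sk κ₂ (x 1) ^ 2 * Real.cos (x 2) ^ 2))

/-- The function L₁. -/
def L1 (κ₁ κ₂ k β₂ β₃ : ℝ) (x : Pt) : ℝ :=
  -(J02 κ₁ κ₂ x * J12 κ₂ x) - J03 κ₁ κ₂ x * J13 κ₂ x + k * κ₂ * Ck κ₂ (x 1)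
    - (2 * κ₂ * Ck κ₂ (x 1) / (Tk κ₁ (x 0) * Sk κ₂ (x 1) ^ 2)) *
        (β₂ / Real.cos (x 2) ^ 2 + β₃ / Real.sin (x 2) ^ 2)

/-- The function L₂. -/
def L2 (κ₁ κ₂ k β₁ β₃ : ℝ) (x : Pt) : ℝ :=
  J01 κ₁ κ₂ x * J12 κ₂ x - J03 κ₁ κ₂ x * J23 x + k * κ₂ * Sk κ₂ (x 1) * Real.cos (x 2)
    - (2 * κ₂ * Real.cos (x 2) / Tk κ₁ (x 0)) *
        (β₁ * Sk κ₂ (x 1) / Ck κ₂ (x 1) ^ 2 + β₃ / (Sk κ₂ (x 1) * Real.sin (x 2) ^ 2))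

/-- The function L₃. -/
def L3 (κ₁ κ₂ k β₁ β₂ : ℝ) (x : Pt) : ℝ :=
  J01 κ₁ κ₂ x * J13 κ₂ x + J02 κ₁ κ₂ x * J23 x + k * κ₂ * Sk κ₂ (x 1) * Real.sin (x 2)
    - (2 * κ₂ * Real.sin (x 2) / Tk κ₁ (x 0)) *
        (β₁ * Sk κ₂ (x 1) / Ck κ₂ (x 1) ^ 2 + β₂ / (Sk κ₂ (x 1) * Real.cos (x 2) ^ 2))

theorem Ck_sq_eq_cos (s x : ℝ) : Ck (s ^ 2) x = Real.cos (s * x) := by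
  rw [Ck, Real.cos_eq_tsum]
  congr 1 with l
  ring

theorem mul_Sk_sq_eq_sin (s x : ℝ) : s * Sk (s ^ 2) x = Real.sin (s * x) := by
  rw [Sk, ← tsum_mul_left, Real.sin_eq_tsum]
  congr 1 with l
  ring

theorem Ck_neg_sq_eq_cosh (s x : ℝ) : Ck (-s ^ 2) x = Real.cosh (s * x) := by
  rw [Ck, Real.cosh_eq_tsum]
  congr 1 with l
  ring

theorem mul_Sk_neg_sq_eq_sinh (s x : ℝ) : s * Sk (-s ^ 2) x = Real.sinh (s * x) := by
  rw [Sk, ← tsum_mul_left, Real.sinh_eq_tsum]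
  congr 1 with l
  ring

theorem Ck_sq_add_mul_Sk_sq (κ x : ℝ) : Ck κ x ^ 2 + κ * Sk κ x ^ 2 = 1 := by
  rcases le_or_gt 0 κ with hκ | hκ
  · obtain ⟨s, rfl⟩ : ∃ s, κ = s ^ 2 := ⟨√κ, (Real.sq_sqrt hκ).symm⟩
    rw [← mul_pow, mul_Sk_sq_eq_sin, Ck_sq_eq_cos, Real.cos_sq_add_sin_sq]
  · obtain ⟨s, rfl⟩ : ∃ s, κ = -s ^ 2 := ⟨√(-κ), by rw [Real.sq_sqrt (by linarith), neg_neg]⟩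
    rw [neg_mul, ← mul_pow, ← sub_eq_add_neg, mul_Sk_neg_sq_eq_sinh, Ck_neg_sq_eq_cosh,
      Real.cosh_sq_sub_sinh_sq]

theorem rotate_sq_add_rotate_sq {R : Type*} [CommRing R] {c s : R} (h : c ^ 2 + s ^ 2 = 1)
    (a b : R) : (c * a - s * b) ^ 2 + (s * a + c * b) ^ 2 = a ^ 2 + b ^ 2 := by
  linear_combination (a ^ 2 + b ^ 2) * h

theorem rotate_mul_rotate_sub {R : Type*} [CommRing R] {c s : R} (h : c ^ 2 + s ^ 2 = 1)
    (a b u v : R) :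
    (s * a + c * b) * (c * u - s * v) - (c * a - s * b) * (s * u + c * v) = b * u - a * v := by
  linear_combination (b * u - a * v) * h

-- `J₀₂` and `J₀₃` at `φ = 0`.
def J02₀ (κ₁ κ₂ : ℝ) (x : Pt) : ℝ := κ₂ * Sk κ₂ (x 1) * x 3 + Ck κ₂ (x 1) / Tk κ₁ (x 0) * x 4

def J03₀ (κ₁ κ₂ : ℝ) (x : Pt) : ℝ := x 5 / (Tk κ₁ (x 0) * Sk κ₂ (x 1))

theorem J02_eq (κ₁ κ₂ : ℝ) (x : Pt) :
    J02 κ₁ κ₂ x = Real.cos (x 2) * J02₀ κ₁ κ₂ x - Real.sin (x 2) * J03₀ κ₁ κ₂ x := by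
  simp only [J02, J02₀, J03₀]; ring

theorem J03_eq (κ₁ κ₂ : ℝ) (x : Pt) :
    J03 κ₁ κ₂ x = Real.sin (x 2) * J02₀ κ₁ κ₂ x + Real.cos (x 2) * J03₀ κ₁ κ₂ x := by
  simp only [J03, J02₀, J03₀]; ring

theorem J12_eq (κ₂ : ℝ) (x : Pt) :
    J12 κ₂ x = Real.cos (x 2) * x 4 - Real.sin (x 2) * (x 5 / Tk κ₂ (x 1)) := by
  simp only [J12]; ring

theorem J13_eq (κ₂ : ℝ) (x : Pt) :
    J13 κ₂ x = Real.sin (x 2) * x 4 + Real.cos (x 2) * (x 5 / Tk κ₂ (x 1)) := by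
  simp only [J13]; ring

theorem casimir₁_reduced_eq {κ₁ κ₂ : ℝ} (hκ₂ : κ₂ ≠ 0) {x : Pt} (hs₁ : Sk κ₁ (x 0) ≠ 0)
    (hs₂ : Sk κ₂ (x 1) ≠ 0) :
    κ₂ * J01 κ₁ κ₂ x ^ 2 + (J02₀ κ₁ κ₂ x ^ 2 + J03₀ κ₁ κ₂ x ^ 2)
      + κ₁ * (x 4 ^ 2 + (x 5 / Tk κ₂ (x 1)) ^ 2) + κ₁ * κ₂ * J23 x ^ 2
      = 2 * κ₂ * Tkin κ₁ κ₂ x := by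
  have h₁ := Ck_sq_add_mul_Sk_sq κ₁ (x 0)
  have h₂ := Ck_sq_add_mul_Sk_sq κ₂ (x 1)
  simp only [J01, J02₀, J03₀, J23, Tkin, Tk]
  field_simp
  linear_combination (κ₂ * Sk κ₂ (x 1) ^ 2 * Sk κ₁ (x 0) ^ 2 * x 3 ^ 2
      + Sk κ₂ (x 1) ^ 2 * Ck κ₁ (x 0) ^ 2 * x 4 ^ 2 + κ₁ * Sk κ₁ (x 0) ^ 2 * x 5 ^ 2) * h₂
    + (Sk κ₂ (x 1) ^ 2 * x 4 ^ 2 + x 5 ^ 2) * h₁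

theorem casimir₂_reduced_eq_zero {κ₁ κ₂ : ℝ} {x : Pt} (hs₁ : Sk κ₁ (x 0) ≠ 0)
    (hs₂ : Sk κ₂ (x 1) ≠ 0) :
    κ₂ * J01 κ₁ κ₂ x * J23 x + (J03₀ κ₁ κ₂ x * x 4 - J02₀ κ₁ κ₂ x * (x 5 / Tk κ₂ (x 1))) = 0 := by
  have h₂ := Ck_sq_add_mul_Sk_sq κ₂ (x 1)
  simp only [J01, J02₀, J03₀, J23, Tk]
  field_simp
  linear_combination -(x 5 * Ck κ₁ (x 0) * x 4) * h₂

/-- the first Casimir equals 2κ₂T and the second Casimir vanishes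
on D, under the geodesic polar realization. -/
theorem casimirs_of_geodesic_polar_realization (κ₁ κ₂ : ℝ) (hκ₂ : κ₂ ≠ 0) :
    ∀ x ∈ D κ₁ κ₂,
      κ₂ * J01 κ₁ κ₂ x ^ 2 + J02 κ₁ κ₂ x ^ 2 + J03 κ₁ κ₂ x ^ 2
          + κ₁ * J12 κ₂ x ^ 2 + κ₁ * J13 κ₂ x ^ 2 + κ₁ * κ₂ * J23 x ^ 2
        = 2 * κ₂ * Tkin κ₁ κ₂ x ∧
      κ₂ * J01 κ₁ κ₂ x * J23 x - J02 κ₁ κ₂ x * J13 κ₂ x + J03 κ₁ κ₂ x * J12 κ₂ x = 0 := by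
  rintro x ⟨hs₁, -, hs₂, -, -, -⟩
  have hφ := Real.cos_sq_add_sin_sq (x 2)
  rw [J02_eq, J03_eq, J12_eq, J13_eq]
  constructor
  · linear_combination rotate_sq_add_rotate_sq hφ (J02₀ κ₁ κ₂ x) (J03₀ κ₁ κ₂ x)
      + κ₁ * rotate_sq_add_rotate_sq hφ (x 4) (x 5 / Tk κ₂ (x 1))
      + casimir₁_reduced_eq hκ₂ hs₁ hs₂
  · linear_combination
      rotate_mul_rotate_sub hφ (J02₀ κ₁ κ₂ x) (J03₀ κ₁ κ₂ x) (x 4) (x 5 / Tk κ₂ (x 1))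
        + casimir₂_reduced_eq_zero hs₁ hs₂

end
end Paper
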